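/- arXiv:1104.3418 — 4 statements merged into one kernel-verified Lean document; each statement's English description precedes it below -/
import Mathlib

section
/- Let A be a finite dimensional algebra, T a tilting A-module with coresolution 0 → A → T_0 → T_1 → 0, and let ℓ(A) = T_0/τ_{T_1}(T_0) where τ_{T_1}(T_0) is the trace of T_1 in T_0. Then for every A-module M with Hom_A(T_1, M) = 0 = Ext^1_A(T_1, M), the natural map Hom_A(ℓ(A), M) → Hom_A(A, M) ≅ M induced by the composite A → T_0 → ℓ(A) is an isomorphism; in particular ℓ(A) is a projective generator of the perpendicular category of T_1. -/
/-!
STATEMENT 3: Let `A` be a finite dimensional algebra, `T` a tilting module with coresolution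
`0 → A → T0 → T1 → 0`, and `ℓ(A) = T0 / τ_{T1}(T0)` the quotient of `T0` by the trace of `T1`.
Then for every finitely generated module `M` with `Hom(T1, M) = 0 = Ext^1(T1, M)`, the map
`Hom_A(ℓ(A), M) → M`, `h ↦ h(π(f(1)))`, is bijective (so `ℓ(A)` is a projective generator of
the perpendicular category of `T1`).
-/

open CategoryTheory

universe u

noncomputable section

/-- `projDimLE n M` : the module `M` has projective dimension at most `n`. -/
def projDimLE {R : Type u} [Ring R] : ℕ → ModuleCat.{u} R → Prop
  | 0, M => Projective M
  | n + 1, M => ∃ (P : ModuleCat.{u} R) (f : P ⟶ M),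
      Projective P ∧ Epi f ∧ projDimLE n (Limits.kernel f)

/-- `M` belongs to `add T`. -/
def memAdd {R : Type u} [Ring R] (T M : ModuleCat.{u} R) : Prop :=
  ∃ (m : ℕ) (N : ModuleCat.{u} R), Nonempty ((↥M × ↥N) ≃ₗ[R] (Fin m → ↥T))

/-!
Applying `Hom(-, M)` to `0 → A → T0 → T1 → 0` gives the exact sequence
`0 → Hom(T1, M) → Hom(T0, M) → Hom(A, M) → Ext¹(T1, M)`, whose outer terms vanish, so
`Hom(T0, M) ≅ Hom(A, M) ≅ M`. Since `Hom(T1, M) = 0`, every map `T0 → M` kills the trace of `T1`,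
hence factors uniquely through `ℓ(A) = T0 / τ`.
-/

namespace CategoryTheory.ShortComplex.ShortExact

variable {C : Type*} [Category C] [Abelian C] {S : ShortComplex C} (hS : S.ShortExact) {Y : C}
include hS

lemma precomp_f_injective (hY : ∀ φ : S.X₃ ⟶ Y, φ = 0) :
    Function.Injective (fun v : S.X₂ ⟶ Y => S.f ≫ v) := by
  intro v₁ v₂ hv
  have hf : S.f ≫ (v₁ - v₂) = 0 := by simpa [Preadditive.comp_sub, sub_eq_zero] using hv
  have := hS.epi_g
  rw [← sub_eq_zero, ← hS.exact.g_desc _ hf, hY (hS.exact.desc _ hf), Limits.comp_zero]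

lemma precomp_f_surjective [HasExt C] (hY : Subsingleton (Abelian.Ext S.X₃ Y 1)) :
    Function.Surjective (fun v : S.X₂ ⟶ Y => S.f ≫ v) := by
  intro u
  obtain ⟨x, hx⟩ := Abelian.Ext.contravariant_sequence_exact₁ hS Y
    (Abelian.Ext.mk₀ u) (n₁ := 1) rfl (Subsingleton.elim _ _)
  obtain ⟨v, rfl⟩ := (Abelian.Ext.mk₀_bijective S.X₂ Y).surjective x
  exact ⟨v, (Abelian.Ext.mk₀_bijective S.X₁ Y).injective (by simpa using hx)⟩

lemma precomp_f_bijective [HasExt C] (hY₀ : ∀ φ : S.X₃ ⟶ Y, φ = 0)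
    (hY₁ : Subsingleton (Abelian.Ext S.X₃ Y 1)) :
    Function.Bijective (fun v : S.X₂ ⟶ Y => S.f ≫ v) :=
  ⟨hS.precomp_f_injective hY₀, hS.precomp_f_surjective hY₁⟩

end CategoryTheory.ShortComplex.ShortExact

namespace Submodule

variable {R M N : Type*} [Ring R] [AddCommGroup M] [Module R M] [AddCommGroup N] [Module R N]

lemma comp_mkQ_bijective {p : Submodule R M} (hp : ∀ v : M →ₗ[R] N, p ≤ LinearMap.ker v) :
    Function.Bijective (fun h : (M ⧸ p) →ₗ[R] N => h.comp p.mkQ) :=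
  ⟨fun _ _ h => linearMap_qext p h, fun v => ⟨p.liftQ v (hp v), p.liftQ_mkQ v (hp v)⟩⟩

lemma iSup_range_le_ker_of_forall_eq_zero {P : Type*} [AddCommGroup P] [Module R P]
    (hN : ∀ φ : P →ₗ[R] N, φ = 0) (v : M →ₗ[R] N) :
    ⨆ φ : P →ₗ[R] M, LinearMap.range φ ≤ LinearMap.ker v :=
  iSup_le fun _ => LinearMap.range_le_ker_iff.mpr (hN _)

end Submodule

variable {k A : Type u} [Field k] [Ring A] [Algebra k A] [FiniteDimensional k A]
  [HasExt.{u} (ModuleCat.{u} A)]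

theorem ellA_projective_generator_of_perpendicular_general
    (T0 T1 : ModuleCat.{u} A)
    -- the coresolution `0 → A → T0 → T1 → 0` :
    (f : ModuleCat.of A A ⟶ T0) (g : T0 ⟶ T1) (w : f ≫ g = 0)
    (hS : (ShortComplex.mk f g w).ShortExact)
    -- the trace of `T1` in `T0` :
    (τ : Submodule A ↥T0) (hτ : τ = ⨆ φ : ↥T1 →ₗ[A] ↥T0, LinearMap.range φ)
    -- a module in the perpendicular category of `T1` :
    (M : ModuleCat.{u} A)
    (hM0 : ∀ φ : ↥T1 →ₗ[A] ↥M, φ = 0)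
    (hM1 : Subsingleton (Abelian.Ext T1 M 1)) :
    Function.Bijective
      (fun h : (↥T0 ⧸ τ) →ₗ[A] ↥M => h (Submodule.Quotient.mk (f (1 : A)))) := by
  have hquot := Submodule.comp_mkQ_bijective (N := M) (p := τ)
    (hτ ▸ Submodule.iSup_range_le_ker_of_forall_eq_zero hM0)
  have hprecomp := hS.precomp_f_bijective (Y := M)
    (fun φ => ModuleCat.hom_ext (hM0 φ.hom)) hM1
  exact (LinearMap.ringLmapEquivSelf A ℕ M).bijective.comp <|
    ModuleCat.homEquiv.bijective.comp <| hprecomp.comp <|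
      ModuleCat.homEquiv.symm.bijective.comp hquot

theorem ellA_projective_generator_of_perpendicular
    (T T0 T1 : ModuleCat.{u} A) [Module.Finite A T]
    -- `T` is a tilting module:
    (hpd : projDimLE 1 T)
    (hself : Subsingleton (Abelian.Ext T T 1))
    (hT0 : memAdd T T0) (hT1 : memAdd T T1)
    -- the coresolution `0 → A → T0 → T1 → 0` :
    (f : ModuleCat.of A A ⟶ T0) (g : T0 ⟶ T1) (w : f ≫ g = 0)
    (hS : (ShortComplex.mk f g w).ShortExact)
    -- the trace of `T1` in `T0` :
    (τ : Submodule A ↥T0) (hτ : τ = ⨆ φ : ↥T1 →ₗ[A] ↥T0, LinearMap.range φ)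
    -- a module in the perpendicular category of `T1` :
    (M : ModuleCat.{u} A) [Module.Finite A M]
    (hM0 : ∀ φ : ↥T1 →ₗ[A] ↥M, φ = 0)
    (hM1 : Subsingleton (Abelian.Ext T1 M 1)) :
    Function.Bijective
      (fun h : (↥T0 ⧸ τ) →ₗ[A] ↥M => h (Submodule.Quotient.mk (f (1 : A)))) :=
  ellA_projective_generator_of_perpendicular_general T0 T1 f g w hS τ hτ M hM0 hM1

end
end

section
/- Let A be the path algebra of the quiver with vertices 1, 2, arrows α: 1 → 2, β: 2 → 1, modulo the relation αβα = 0. Let T_1 = P_2 be the indecomposable projective at vertex 2. Then C = End_A(T_1) is isomorphic to k[x]/(x^2), and T_1 regarded as a left C-module decomposes as C ⊕ k, where k is the simple C-module; in particular T_1 has infinite projective dimension as a left C-module. -/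
/-!
`End_A(e₂A)` is the corner ring `e₂Ae₂`, which has basis `e₂, ab` with `(ab)² = 0`; so it is
`k[x]/(x²)` with `x = ab`, and `e₂A = e₂Ae₂ ⊕ k a` as a module over it, with `x` killing `a`.

Let `c` be an element of a ring `R` with `c² = 0` and `{g | c g = 0} = c R`. Then
`N --c--> N --c--> N` is exact for every projective `N`, being exact for free modules. If it is not
exact for `N`, it is not exact for the kernel `K` of a surjection `P → N` from a projective either:
lift a witness `v` to `p ∈ P`; if `c p ∈ K` were `c u` with `u ∈ K`, then `c (p - u) = 0`, so
`p - u ∈ c P` and `v ∈ c N`. Hence such `N`, like `k = R/(c)`, has no finite projective resolution.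
-/

open CategoryTheory

universe u

noncomputable section

section IsSMulExact

variable {R : Type*} [Ring R] (c : R)

def IsSMulExact (N : Type*) [AddCommGroup N] [Module R N] : Prop :=
  ∀ v : N, c • v = 0 → ∃ w : N, c • w = v

variable {c}

theorem IsSMulExact.of_linearEquiv {N N' : Type*} [AddCommGroup N] [Module R N]
    [AddCommGroup N'] [Module R N'] (e : N ≃ₗ[R] N') (h : IsSMulExact c N) :
    IsSMulExact c N' := by
  intro v hv
  obtain ⟨w, hw⟩ := h (e.symm v) (by rw [← map_smul, hv, map_zero])
  exact ⟨e w, by rw [← map_smul, hw, e.apply_symm_apply]⟩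

theorem IsSMulExact.of_prod_right {N N' : Type*} [AddCommGroup N] [Module R N]
    [AddCommGroup N'] [Module R N'] (h : IsSMulExact c (N × N')) : IsSMulExact c N' := by
  intro v hv
  obtain ⟨w, hw⟩ := h (0, v) (by simp [hv])
  exact ⟨w.2, congrArg Prod.snd hw⟩

theorem IsSMulExact.finsupp (hR : IsSMulExact c R) (ι : Type*) : IsSMulExact c (ι →₀ R) := by
  intro v hv
  choose w hw using fun i => hR (v i) (by simpa using congrArg (· i) hv)
  refine ⟨v.sum fun i _ => Finsupp.single i (w i), ?_⟩
  rw [Finsupp.smul_sum]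
  conv_rhs => rw [← v.sum_single]
  exact Finsupp.sum_congr fun i _ => by rw [Finsupp.smul_single, hw]

theorem IsSMulExact.of_projective (hR : IsSMulExact c R) (P : Type*) [AddCommGroup P]
    [Module R P] [Module.Projective R P] : IsSMulExact c P := by
  obtain ⟨s, hs⟩ := Module.projective_def'.mp (inferInstance : Module.Projective R P)
  intro v hv
  obtain ⟨w, hw⟩ := hR.finsupp P (s v) (by rw [← map_smul, hv, map_zero])
  refine ⟨Finsupp.linearCombination R id w, ?_⟩
  rw [← map_smul, hw]
  exact LinearMap.congr_fun hs v

theorem not_isSMulExact_ker (hcc : c * c = 0) (hR : IsSMulExact c R) {P N : Type*}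
    [AddCommGroup P] [Module R P] [Module.Projective R P] [AddCommGroup N] [Module R N]
    {f : P →ₗ[R] N} (hf : Function.Surjective f) (hN : ¬ IsSMulExact c N) :
    ¬ IsSMulExact c (LinearMap.ker f) := by
  refine fun hK => hN fun v hv => ?_
  obtain ⟨p, rfl⟩ := hf v
  have hcp : c • p ∈ LinearMap.ker f := by rw [LinearMap.mem_ker, map_smul, hv]
  obtain ⟨⟨u, hu⟩, hcu⟩ := hK ⟨c • p, hcp⟩ (Subtype.ext (by simp [smul_smul, hcc]))
  obtain ⟨q, hq⟩ := hR.of_projective P (p - u) (by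
    rw [smul_sub, sub_eq_zero]; exact (congrArg Subtype.val hcu).symm)
  refine ⟨f q, ?_⟩
  rw [← map_smul, hq, map_sub, LinearMap.mem_ker.mp hu, sub_zero]

theorem not_projDimLE_of_not_isSMulExact (hcc : c * c = 0)
    (hR : IsSMulExact c R) (n : ℕ) (N : ModuleCat R) (hN : ¬ IsSMulExact c N) :
    ¬ projDimLE n N := by
  induction n generalizing N with
  | zero =>
    intro hP
    have := (IsProjective.iff_projective N).mpr hP
    exact hN (hR.of_projective N)
  | succ n ih =>
    rintro ⟨P, f, hP, hf, hK⟩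
    have := (IsProjective.iff_projective P).mpr hP
    have hfs := (ModuleCat.epi_iff_surjective f).mp hf
    exact ih _ (fun h => not_isSMulExact_ker hcc hR hfs hN
      (h.of_linearEquiv (ModuleCat.kernelIsoKer f).toLinearEquiv)) hK

end IsSMulExact

open Polynomial in
theorem Polynomial.X_sq_dvd_sub_coeff {R : Type*} [CommRing R] (p : R[X]) :
    X ^ 2 ∣ p - (C (p.coeff 0) + C (p.coeff 1) * X) := by
  rw [X_pow_dvd_iff]
  intro d hd
  interval_cases d <;> simp

structure DualNumberPresentation (k E : Type*) [Field k] [Ring E] where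
  scalar : k →+* E
  eps : E
  eps_mul_eps : eps * eps = 0
  commute : ∀ s, Commute (scalar s) eps
  exists_eq : ∀ f : E, ∃ s t, scalar s + scalar t * eps = f
  eq_zero : ∀ s t, scalar s + scalar t * eps = 0 → s = 0 ∧ t = 0

namespace DualNumberPresentation

variable {k E E' : Type*} [Field k] [Ring E] [Ring E'] (P : DualNumberPresentation k E)

def map (φ : E ≃+* E') : DualNumberPresentation k E' where
  scalar := φ.toRingHom.comp P.scalar
  eps := φ P.eps
  eps_mul_eps := by rw [← map_mul, P.eps_mul_eps, map_zero]
  commute s := (P.commute s).map φ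
  exists_eq f := by
    obtain ⟨s, t, h⟩ := P.exists_eq (φ.symm f)
    exact ⟨s, t, by rw [← φ.apply_symm_apply f, ← h]; simp⟩
  eq_zero s t h := P.eq_zero s t (φ.injective (by simpa using h))

theorem eq_of_scalar_add_mul_eps_eq {s t s' t' : k}
    (h : P.scalar s + P.scalar t * P.eps = P.scalar s' + P.scalar t' * P.eps) :
    s = s' ∧ t = t' := by
  have h0 : P.scalar (s - s') + P.scalar (t - t') * P.eps = 0 := by
    rw [map_sub, map_sub, sub_mul, ← sub_eq_zero.mpr h]; abel
  obtain ⟨hs, ht⟩ := P.eq_zero _ _ h0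
  exact ⟨sub_eq_zero.mp hs, sub_eq_zero.mp ht⟩

theorem eps_mul_eq (s t : k) :
    P.eps * (P.scalar s + P.scalar t * P.eps) = P.scalar s * P.eps := by
  rw [mul_add, ← mul_assoc, ← (P.commute t).eq, mul_assoc, P.eps_mul_eps, mul_zero, add_zero,
    (P.commute s).eq]

theorem mem_span_eps_iff {f : E} : f ∈ Ideal.span {P.eps} ↔ ∃ t, P.scalar t * P.eps = f := by
  rw [Ideal.mem_span_singleton']
  refine ⟨fun ⟨g, hg⟩ => ?_, fun ⟨t, ht⟩ => ⟨_, ht⟩⟩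
  obtain ⟨s, t, rfl⟩ := P.exists_eq g
  exact ⟨s, by rw [← hg, add_mul, mul_assoc, P.eps_mul_eps, mul_zero, add_zero]⟩

theorem eps_mul_mem_span (f : E) : P.eps * f ∈ Ideal.span {P.eps} := by
  obtain ⟨s, t, rfl⟩ := P.exists_eq f
  exact (P.mem_span_eps_iff).mpr ⟨s, (P.eps_mul_eq s t).symm⟩

theorem one_notMem_span_eps : (1 : E) ∉ Ideal.span {P.eps} := by
  rw [mem_span_eps_iff]
  rintro ⟨t, ht⟩
  exact zero_ne_one
    (P.eq_of_scalar_add_mul_eps_eq (s := 0) (t := t) (s' := 1) (t' := 0) (by simpa using ht)).1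

theorem isMaximal_span_eps : (Ideal.span {P.eps}).IsMaximal := by
  refine Ideal.isMaximal_iff.mpr ⟨P.one_notMem_span_eps, fun J f hle hf hfJ => ?_⟩
  obtain ⟨s, t, rfl⟩ := P.exists_eq f
  have hs : s ≠ 0 := by
    rintro rfl
    exact hf ((P.mem_span_eps_iff).mpr ⟨t, by simp⟩)
  have hsJ : P.scalar s ∈ J := by
    simpa using J.sub_mem hfJ (hle ((P.mem_span_eps_iff).mpr ⟨t, rfl⟩))
  simpa [← map_mul, inv_mul_cancel₀ hs] using J.mul_mem_left (P.scalar s⁻¹) hsJ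

theorem mk_scalar_add_mul_eps (s t : k) :
    (Submodule.Quotient.mk (P.scalar s + P.scalar t * P.eps) : E ⧸ Ideal.span {P.eps}) =
      Submodule.Quotient.mk (P.scalar s) :=
  (Submodule.Quotient.eq _).mpr (P.mem_span_eps_iff.mpr ⟨t, by abel⟩)

theorem isSMulExact_self : IsSMulExact P.eps E := by
  intro f hf
  obtain ⟨s, t, rfl⟩ := P.exists_eq f
  rw [smul_eq_mul, P.eps_mul_eq] at hf
  obtain rfl : s = 0 := (P.eq_zero 0 s (by simpa using hf)).2
  exact ⟨P.scalar t, by rw [smul_eq_mul, ← (P.commute t).eq, map_zero, zero_add]⟩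

theorem not_isSMulExact_quotient : ¬ IsSMulExact P.eps (E ⧸ Ideal.span {P.eps}) := by
  intro h
  obtain ⟨w, hw⟩ := h (Submodule.Quotient.mk 1) (by
    rw [← Submodule.Quotient.mk_smul, smul_eq_mul, mul_one, Submodule.Quotient.mk_eq_zero]
    exact Ideal.subset_span rfl)
  obtain ⟨g, rfl⟩ := Submodule.Quotient.mk_surjective _ w
  have hg : Submodule.Quotient.mk (P.eps * g) = (0 : E ⧸ Ideal.span {P.eps}) :=
    (Submodule.Quotient.mk_eq_zero _).mpr (P.eps_mul_mem_span g)
  rw [← Submodule.Quotient.mk_smul, smul_eq_mul, hg, eq_comm, Submodule.Quotient.mk_eq_zero] at hw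
  exact P.one_notMem_span_eps hw

theorem isSimpleModule_quotient : IsSimpleModule E (E ⧸ Ideal.span {P.eps}) :=
  isSimpleModule_iff_isCoatom.mpr P.isMaximal_span_eps.out

theorem not_projDimLE (n : ℕ) (N : ModuleCat E) (hN : ¬ IsSMulExact P.eps N) : ¬ projDimLE n N :=
  not_projDimLE_of_not_isSMulExact P.eps_mul_eps P.isSMulExact_self n N hN

open Polynomial

def liftQuotient : k[X] ⧸ Ideal.span {(X : k[X]) ^ 2} →+* E :=
  Ideal.Quotient.lift _ (eval₂RingHom' P.scalar P.eps P.commute) fun p hp => by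
    obtain ⟨q, rfl⟩ := Ideal.mem_span_singleton.mp hp
    rw [map_mul, map_pow, eval₂RingHom'_apply, eval₂_X, sq, P.eps_mul_eps, zero_mul]

theorem liftQuotient_mk (p : k[X]) : P.liftQuotient (Ideal.Quotient.mk _ p) =
    P.scalar (p.coeff 0) + P.scalar (p.coeff 1) * P.eps := by
  rw [Ideal.Quotient.mk_eq_mk_iff_sub_mem _ _ |>.mpr
    (Ideal.mem_span_singleton.mpr (X_sq_dvd_sub_coeff p))]
  simp [liftQuotient]

theorem liftQuotient_bijective : Function.Bijective P.liftQuotient := by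
  refine ⟨(injective_iff_map_eq_zero _).mpr fun q hq => ?_, fun f => ?_⟩
  · obtain ⟨p, rfl⟩ := Ideal.Quotient.mk_surjective q
    rw [liftQuotient_mk] at hq
    obtain ⟨h0, h1⟩ := P.eq_zero _ _ hq
    rw [Ideal.Quotient.mk_eq_mk_iff_sub_mem _ _ |>.mpr
      (Ideal.mem_span_singleton.mpr (X_sq_dvd_sub_coeff p)), h0, h1]
    simp
  · obtain ⟨s, t, rfl⟩ := P.exists_eq f
    exact ⟨Ideal.Quotient.mk _ (C s + C t * X), by simp [liftQuotient_mk]⟩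

def ringEquiv : (k[X] ⧸ Ideal.span {(X : k[X]) ^ 2}) ≃+* E :=
  RingEquiv.ofBijective P.liftQuotient P.liftQuotient_bijective

end DualNumberPresentation

namespace IsIdempotentElem

variable {R : Type*} [Ring R] {e : R} (he : IsIdempotentElem e)
include he

theorem mem_span_op_singleton_iff {m : R} :
    m ∈ Submodule.span Rᵐᵒᵖ {e} ↔ e * m = m := by
  rw [Submodule.mem_span_singleton]
  constructor
  · rintro ⟨r, rfl⟩
    rw [MulOpposite.smul_eq_mul_unop, ← mul_assoc, he.eq]
  · exact fun h => ⟨MulOpposite.op m, by rw [MulOpposite.smul_eq_mul_unop, MulOpposite.unop_op, h]⟩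

theorem op_smul_span_generator (m : Submodule.span Rᵐᵒᵖ {e}) :
    MulOpposite.op (m : R) • (⟨e, Submodule.mem_span_singleton_self e⟩ : Submodule.span Rᵐᵒᵖ {e}) =
      m :=
  Subtype.ext (he.mem_span_op_singleton_iff.mp m.2)

def cornerRingEquivEnd : he.Corner ≃+* Module.End Rᵐᵒᵖ (Submodule.span Rᵐᵒᵖ {e}) where
  toFun x :=
    { toFun m := ⟨x.1 * m, he.mem_span_op_singleton_iff.mpr <| by
        rw [← mul_assoc, ((Subsemigroup.mem_corner_iff he).mp x.2).1]⟩
      map_add' m m' := Subtype.ext (mul_add _ _ _)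
      map_smul' r m := Subtype.ext (by simp [MulOpposite.smul_eq_mul_unop, mul_assoc]) }
  invFun f := ⟨f ⟨e, Submodule.mem_span_singleton_self e⟩, (Subsemigroup.mem_corner_iff he).mpr
    ⟨he.mem_span_op_singleton_iff.mp (f _).2, congrArg Subtype.val
      ((f.map_smul _ _).symm.trans (congrArg f (he.op_smul_span_generator ⟨e, _⟩)))⟩⟩
  left_inv x := Subtype.ext ((Subsemigroup.mem_corner_iff he).mp x.2).2
  right_inv f := by
    ext m
    exact congrArg Subtype.val
      ((f.map_smul _ _).symm.trans (congrArg f (he.op_smul_span_generator m)))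
  map_mul' x y := by ext m; exact mul_assoc _ _ _
  map_add' x y := by ext m; exact add_mul _ _ _

theorem cornerRingEquivEnd_apply_coe (x : he.Corner) (m : Submodule.span Rᵐᵒᵖ {e}) :
    (he.cornerRingEquivEnd x m : R) = x.1 * m := rfl

end IsIdempotentElem

-- `e, a, n` play the roles of `e₂, α, αβ`: a `k`-basis of `P₂ = e₂A`.
structure IsP2Basis (k : Type*) {A : Type*} [Field k] [Ring A] [Algebra k A] (e a n : A) :
    Prop where
  idem : IsIdempotentElem e
  mul_a : e * a = a
  a_mul : a * e = 0
  mul_n : e * n = n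
  n_mul : n * e = n
  n_mul_a : n * a = 0
  n_mul_n : n * n = 0
  exists_eq : ∀ x : A, ∃ α β γ : k, α • e + β • a + γ • n = e * x
  linearIndependent : LinearIndependent k ![e, a, n]

namespace IsP2Basis

variable {k A : Type*} [Field k] [Ring A] [Algebra k A] {e a n : A} (h : IsP2Basis k e a n)
include h

theorem coeff_eq_zero {α β γ : k} (hz : α • e + β • a + γ • n = 0) : α = 0 ∧ β = 0 ∧ γ = 0 := by
  have := Fintype.linearIndependent_iff.mp h.linearIndependent ![α, β, γ]
    (by simpa [Fin.sum_univ_three] using hz)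
  exact ⟨this 0, this 1, this 2⟩

theorem mem_corner_iff {x : A} :
    x ∈ Subsemigroup.corner e ↔ ∃ s t : k, s • e + t • n = x := by
  rw [Subsemigroup.mem_corner_iff h.idem]
  constructor
  · rintro ⟨hl, hr⟩
    obtain ⟨α, β, γ, hx⟩ := h.exists_eq x
    rw [hl] at hx
    have hβ : β • a = 0 := by
      have := congrArg (· * e) hx
      simp only [add_mul, smul_mul_assoc, h.idem.eq, h.a_mul, h.n_mul, smul_zero, hr] at this
      rwa [← this, add_zero, add_right_comm, add_eq_left] at hx
    obtain rfl : β = 0 := (h.coeff_eq_zero (α := 0) (γ := 0) (by simpa using hβ)).2.1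
    exact ⟨α, γ, by simpa using hx⟩
  · rintro ⟨s, t, rfl⟩
    simp [mul_add, add_mul, h.idem.eq, h.mul_n, h.n_mul]

def cornerPresentation : DualNumberPresentation k h.idem.Corner where
  scalar :=
    { toFun s := ⟨s • e, h.mem_corner_iff.mpr ⟨s, 0, by simp⟩⟩
      map_one' := Subtype.ext (one_smul k e)
      map_mul' s t := Subtype.ext <| show (s * t) • e = (s • e) * (t • e) by
        rw [smul_mul_smul_comm, h.idem.eq]
      map_zero' := Subtype.ext (zero_smul k e)
      map_add' s t := Subtype.ext (add_smul s t e) }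
  eps := ⟨n, h.mem_corner_iff.mpr ⟨0, 1, by simp⟩⟩
  eps_mul_eps := Subtype.ext h.n_mul_n
  commute s := Subtype.ext <| show (s • e) * n = n * (s • e) by
    rw [smul_mul_assoc, h.mul_n, mul_smul_comm, h.n_mul]
  exists_eq x := by
    obtain ⟨s, t, hx⟩ := h.mem_corner_iff.mp x.2
    exact ⟨s, t, Subtype.ext <| show s • e + (t • e) * n = x.1 by
      rw [smul_mul_assoc, h.mul_n, hx]⟩
  eq_zero s t hz := by
    have hz' : s • e + (t • e) * n = 0 := congrArg Subtype.val hz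
    rw [smul_mul_assoc, h.mul_n] at hz'
    have := h.coeff_eq_zero (α := s) (β := 0) (γ := t) (by rwa [zero_smul, add_zero])
    exact ⟨this.1, this.2.2⟩

variable {T : Type*} [AddCommGroup T] [Module Aᵐᵒᵖ T] (eS : T ≃ₗ[Aᵐᵒᵖ] Submodule.span Aᵐᵒᵖ {e})

def endRingEquiv : h.idem.Corner ≃+* Module.End Aᵐᵒᵖ T :=
  h.idem.cornerRingEquivEnd.trans eS.symm.conjRingEquiv

theorem endRingEquiv_apply (x : h.idem.Corner) (v : T) :
    (eS (h.endRingEquiv eS x v) : A) = x.1 * eS v := by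
  simp [endRingEquiv, IsIdempotentElem.cornerRingEquivEnd_apply_coe]

def endPresentation : DualNumberPresentation k (Module.End Aᵐᵒᵖ T) :=
  h.cornerPresentation.map (h.endRingEquiv eS)

theorem endPresentation_scalar_apply (s : k) (v : T) :
    (eS ((h.endPresentation eS).scalar s v) : A) = s • (eS v : A) := by
  rw [show (eS ((h.endPresentation eS).scalar s v) : A) = (s • e) * eS v from
    h.endRingEquiv_apply eS _ v, smul_mul_assoc,
    h.idem.mem_span_op_singleton_iff.mp (eS v).2]

theorem endPresentation_eps_apply (v : T) :
    (eS ((h.endPresentation eS).eps v) : A) = n * eS v :=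
  h.endRingEquiv_apply eS _ v

theorem endPresentation_eps_smul_generator :
    (h.endPresentation eS).eps • eS.symm ⟨a, h.idem.mem_span_op_singleton_iff.mpr h.mul_a⟩ = 0 :=
  eS.injective <| Subtype.ext <| by
    rw [map_zero, Module.End.smul_def, endPresentation_eps_apply, eS.apply_symm_apply]
    exact h.n_mul_a

def decompositionInv :
    Module.End Aᵐᵒᵖ T × (Module.End Aᵐᵒᵖ T ⧸ Ideal.span {(h.endPresentation eS).eps}) →ₗ[
      Module.End Aᵐᵒᵖ T] T :=
  (LinearMap.toSpanSingleton _ T (eS.symm ⟨e, Submodule.mem_span_singleton_self e⟩)).coprod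
    ((Ideal.span {(h.endPresentation eS).eps}).liftQ (LinearMap.toSpanSingleton _ T
      (eS.symm ⟨a, h.idem.mem_span_op_singleton_iff.mpr h.mul_a⟩))
      ((Ideal.span_singleton_le_iff_mem _).mpr (h.endPresentation_eps_smul_generator eS)))

theorem decompositionInv_apply (s t β : k) :
    (eS (h.decompositionInv eS ((h.endPresentation eS).scalar s +
      (h.endPresentation eS).scalar t * (h.endPresentation eS).eps,
        Submodule.Quotient.mk ((h.endPresentation eS).scalar β))) : A) =
      s • e + β • a + t • n := by
  simp [decompositionInv, Module.End.smul_def, endPresentation_scalar_apply,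
    endPresentation_eps_apply, h.n_mul, add_right_comm]

theorem decompositionInv_bijective : Function.Bijective (h.decompositionInv eS) := by
  set P := h.endPresentation eS
  refine ⟨(injective_iff_map_eq_zero _).mpr fun ⟨f, q⟩ hfq => ?_, fun v => ?_⟩
  · obtain ⟨s, t, rfl⟩ := P.exists_eq f
    obtain ⟨g, rfl⟩ := Submodule.Quotient.mk_surjective _ q
    obtain ⟨β, δ, rfl⟩ := P.exists_eq g
    rw [P.mk_scalar_add_mul_eps] at hfq ⊢
    obtain ⟨rfl, rfl, rfl⟩ := h.coeff_eq_zero <| by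
      rw [← h.decompositionInv_apply eS, hfq, map_zero, Submodule.coe_zero]
    simp
  · obtain ⟨α, β, γ, hv⟩ := h.exists_eq (eS v : A)
    rw [h.idem.mem_span_op_singleton_iff.mp (eS v).2] at hv
    exact ⟨_, eS.injective (Subtype.ext ((h.decompositionInv_apply eS α γ β).trans hv))⟩

def decomposition : T ≃ₗ[Module.End Aᵐᵒᵖ T]
    Module.End Aᵐᵒᵖ T × (Module.End Aᵐᵒᵖ T ⧸ Ideal.span {(h.endPresentation eS).eps}) :=
  (LinearEquiv.ofBijective _ (h.decompositionInv_bijective eS)).symm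

end IsP2Basis

theorem isP2Basis_of_quiver_presentation {k A : Type*} [Field k] [Ring A] [Algebra k A]
    {e₁ e₂ a b : A} (h12 : e₁ * e₂ = 0) (h21 : e₂ * e₁ = 0) (he₂ : e₂ * e₂ = e₂)
    (ha : e₂ * a * e₁ = a) (hb : e₁ * b * e₂ = b) (hrel : a * b * a = 0)
    (B : Module.Basis (Fin 7) k A) (hB : ⇑B = ![e₁, e₂, a, b, b * a, a * b, b * a * b]) :
    IsP2Basis k e₂ a (a * b) := by
  have he₂a : e₂ * a = a := by rw [← ha, ← mul_assoc, ← mul_assoc, he₂]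
  have hae₂ : a * e₂ = 0 := by rw [← ha, mul_assoc, h12, mul_zero]
  have he₂b : e₂ * b = 0 := by rw [← hb, ← mul_assoc, ← mul_assoc, h21, zero_mul, zero_mul]
  have hbe₂ : b * e₂ = b := by rw [← hb, mul_assoc, he₂]
  refine
    { idem := he₂
      mul_a := he₂a
      a_mul := hae₂
      mul_n := by rw [← mul_assoc, he₂a]
      n_mul := by rw [mul_assoc, hbe₂]
      n_mul_a := hrel
      n_mul_n := by rw [← mul_assoc, hrel, zero_mul]
      exists_eq := fun x => ⟨B.repr x 1, B.repr x 2, B.repr x 5, ?_⟩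
      linearIndependent := ?_ }
  · conv_rhs => rw [← B.sum_repr x]
    simp only [Fin.sum_univ_seven, hB, Matrix.cons_val, mul_add, mul_smul_comm, ← mul_assoc,
      h21, he₂, he₂a, he₂b, zero_mul, smul_zero, zero_add, add_zero]
  · have : ![e₂, a, a * b] = B ∘ ![1, 2, 5] := by
      rw [hB]; ext i; fin_cases i <;> rfl
    rw [this]
    exact B.linearIndependent.comp _ (by decide)

variable {k A : Type u} [Field k] [Ring A] [Algebra k A] [FiniteDimensional k A]

theorem endomorphism_ring_of_P2_and_infinite_projdim_general
    (e₁ e₂ a b : A)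
    (h12 : e₁ * e₂ = 0) (h21 : e₂ * e₁ = 0)
    (he₂ : e₂ * e₂ = e₂)
    (ha : e₂ * a * e₁ = a) (hb : e₁ * b * e₂ = b)
    (hrel : a * b * a = 0)
    (B : Module.Basis (Fin 7) k A) (hB : ⇑B = ![e₁, e₂, a, b, b * a, a * b, b * a * b])
    -- `T₁` is (a module isomorphic to) the indecomposable projective `P₂ = e₂A` :
    (T₁ : Type u) [AddCommGroup T₁] [Module Aᵐᵒᵖ T₁]
    (hT₁ : Nonempty (T₁ ≃ₗ[Aᵐᵒᵖ] ↥(Submodule.span Aᵐᵒᵖ ({e₂} : Set A)))) :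
    -- `C = End_A(T₁)` is isomorphic to `k[x]/(x²)` :
    Nonempty ((Polynomial k ⧸ Ideal.span {(Polynomial.X : Polynomial k) ^ 2}) ≃+*
        Module.End Aᵐᵒᵖ T₁) ∧
    -- `T₁` as a left `C`-module decomposes as `C ⊕ k` with `k` the simple `C`-module,
    -- which has infinite projective dimension over `C` :
    (∃ I : Ideal (Module.End Aᵐᵒᵖ T₁),
      IsSimpleModule (Module.End Aᵐᵒᵖ T₁) ((Module.End Aᵐᵒᵖ T₁) ⧸ I) ∧
      Nonempty (T₁ ≃ₗ[Module.End Aᵐᵒᵖ T₁]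
        ((Module.End Aᵐᵒᵖ T₁) × ((Module.End Aᵐᵒᵖ T₁) ⧸ I))) ∧
      (∀ n : ℕ, ¬ projDimLE n
        (ModuleCat.of (Module.End Aᵐᵒᵖ T₁) ((Module.End Aᵐᵒᵖ T₁) ⧸ I)))) ∧
    -- in particular `T₁` has infinite projective dimension as a left `C`-module :
    (∀ n : ℕ, ¬ projDimLE n (ModuleCat.of (Module.End Aᵐᵒᵖ T₁) T₁)) := by
  obtain ⟨eS⟩ := hT₁
  have h := isP2Basis_of_quiver_presentation h12 h21 he₂ ha hb hrel B hB
  set P := h.endPresentation eS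
  refine ⟨⟨P.ringEquiv⟩, ⟨Ideal.span {P.eps}, P.isSimpleModule_quotient, ⟨h.decomposition eS⟩,
    fun n => P.not_projDimLE n _ P.not_isSMulExact_quotient⟩, fun n => P.not_projDimLE n _ ?_⟩
  exact fun hT =>
    P.not_isSMulExact_quotient (hT.of_linearEquiv (h.decomposition eS)).of_prod_right

theorem endomorphism_ring_of_P2_and_infinite_projdim
    (e₁ e₂ a b : A)
    (hsum : e₁ + e₂ = 1) (h12 : e₁ * e₂ = 0) (h21 : e₂ * e₁ = 0)
    (he₁ : e₁ * e₁ = e₁) (he₂ : e₂ * e₂ = e₂)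
    (ha : e₂ * a * e₁ = a) (hb : e₁ * b * e₂ = b)
    (hrel : a * b * a = 0)
    (B : Module.Basis (Fin 7) k A) (hB : ⇑B = ![e₁, e₂, a, b, b * a, a * b, b * a * b])
    -- `T₁` is (a module isomorphic to) the indecomposable projective `P₂ = e₂A` :
    (T₁ : Type u) [AddCommGroup T₁] [Module Aᵐᵒᵖ T₁]
    (hT₁ : Nonempty (T₁ ≃ₗ[Aᵐᵒᵖ] ↥(Submodule.span Aᵐᵒᵖ ({e₂} : Set A)))) :
    -- `C = End_A(T₁)` is isomorphic to `k[x]/(x²)` :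
    Nonempty ((Polynomial k ⧸ Ideal.span {(Polynomial.X : Polynomial k) ^ 2}) ≃+*
        Module.End Aᵐᵒᵖ T₁) ∧
    -- `T₁` as a left `C`-module decomposes as `C ⊕ k` with `k` the simple `C`-module,
    -- which has infinite projective dimension over `C` :
    (∃ I : Ideal (Module.End Aᵐᵒᵖ T₁),
      IsSimpleModule (Module.End Aᵐᵒᵖ T₁) ((Module.End Aᵐᵒᵖ T₁) ⧸ I) ∧
      Nonempty (T₁ ≃ₗ[Module.End Aᵐᵒᵖ T₁]
        ((Module.End Aᵐᵒᵖ T₁) × ((Module.End Aᵐᵒᵖ T₁) ⧸ I))) ∧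
      (∀ n : ℕ, ¬ projDimLE n
        (ModuleCat.of (Module.End Aᵐᵒᵖ T₁) ((Module.End Aᵐᵒᵖ T₁) ⧸ I)))) ∧
    -- in particular `T₁` has infinite projective dimension as a left `C`-module :
    (∀ n : ℕ, ¬ projDimLE n (ModuleCat.of (Module.End Aᵐᵒᵖ T₁) T₁)) :=
  endomorphism_ring_of_P2_and_infinite_projdim_general e₁ e₂ a b h12 h21 he₂ ha hb hrel B hB T₁ hT₁
end
end

section
/- Let A be the path algebra of the quiver with vertices 1, 2, arrows α: 1 → 2, β: 2 → 1, modulo the relation βα = 0, and let ℓ(A) be the direct sum of two copies of the module with top 2 and socle 1 (the quotient of P_2 by its socle). Then the endomorphism ring B = End_A(ℓ(A)) is isomorphic to the 2×2 matrix algebra M_2(k), and the natural ring homomorphism φ: A → B sending e_1 ↦ E_11, e_2 ↦ E_22, α ↦ E_21, β ↦ 0 is a ring epimorphism. -/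
/-
The basis `e₁, e₂, a, b, ab` multiplies like the lower triangular matrices once `b` and `ab` are
sent to `0` (this is where `b a = 0` enters), so `e₁ ↦ E₁₁, e₂ ↦ E₂₂, a ↦ E₂₁, b ↦ 0` is a ring
map `φ`. It is an epimorphism because a ring map out of `M₂(k)` is already determined by its values
on lower triangular matrices.

The module `V = e₂A/(ab)A` is generated by the class of `e₂`, so an endomorphism is determined by
the image of that class, which lies in `V e₂`, i.e. in the image of `e₂Ae₂ = k e₂ + k ab`. As `ab`
dies in `V`, every endomorphism is a scalar: `End_A V = k`, hence `End_A (V ⊕ V) = M₂(k)`.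
-/

open CategoryTheory

universe u

noncomputable section

section

open Matrix

theorem Matrix.ringHom_ext_of_single_of_le {n R S : Type*} [Fintype n] [DecidableEq n]
    [LinearOrder n] [Semiring R] [Semiring S] {g h : Matrix n n R →+* S}
    (hgh : ∀ i j c, j ≤ i → g (single i j c) = h (single i j c)) : g = h := by
  have upper (i j : n) (hij : i < j) : g (single i j 1) = h (single i j 1) := by
    -- `E_ij = E_ij E_jj` and `E_jj = E_ji E_ij` let the factor `E_ij` cross from `g` to `h`
    calc g (single i j 1) = g (single i j 1 * single j j 1) := by simp
      _ = g (single i j 1) * h (single j i 1 * single i j 1) := by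
        rw [map_mul, single_mul_single_same, one_mul, hgh j j 1 le_rfl]
      _ = g (single i j 1 * single j i 1) * h (single i j 1) := by
        rw [map_mul h, ← hgh j i 1 hij.le, ← mul_assoc, ← map_mul]
      _ = h (single i j 1) := by
        rw [single_mul_single_same, one_mul, hgh i i 1 le_rfl, ← map_mul,
          single_mul_single_same, one_mul]
  ext M
  induction M using Matrix.induction_on' with
  | h_zero => simp
  | h_add p q hp hq => rw [map_add, map_add, hp, hq]
  | h_std_basis i j c =>
    rcases le_or_gt j i with hji | hij
    · exact hgh i j c hji
    · have hsplit : single i j c = single i i c * single i j 1 := by simp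
      rw [hsplit, map_mul, map_mul, hgh i i c le_rfl, upper i j hij]

theorem Module.toModuleEnd_surjective_of_corner {k R M : Type*} [CommSemiring k] [Semiring R]
    [Algebra k R] [AddCommMonoid M] [Module R M] [Module k M] [IsScalarTower k R M] {m : M}
    (hm : Submodule.span R {m} = ⊤) {e : R} (he : e • m = m)
    (hcorner : ∀ r : R, ∃ c : k, (e * r * e) • m = c • m) :
    Function.Surjective (Module.toModuleEnd R (S := k) M) := by
  intro g
  obtain ⟨r, hr⟩ := Submodule.mem_span_singleton.mp (hm ▸ Submodule.mem_top : g m ∈ _)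
  obtain ⟨c, hc⟩ := hcorner r
  refine ⟨c, LinearMap.ext_on hm (Set.eqOn_singleton.mpr ?_)⟩
  calc c • m = e • r • m := by rw [← hc, mul_smul, mul_smul, he]
    _ = g m := by rw [hr, ← map_smul, he]

theorem Submodule.span_singleton_mkQ_eq_top {R M : Type*} [Ring R] [AddCommGroup M] [Module R M]
    (x : M) (N : Submodule R (span R {x})) :
    span R {N.mkQ ⟨x, mem_span_singleton_self x⟩} = ⊤ := by
  have hgen : span R {(⟨x, mem_span_singleton_self x⟩ : span R {x})} = ⊤ := by
    convert span_span_coe_preimage (R := R) (s := {x})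
    ext; simp [Subtype.ext_iff]
  rw [← Set.image_singleton, ← map_span, hgen, map_top, range_mkQ]

section Corner

variable {R : Type*} [Semiring R] {e f x : R}

theorem mul_eq_self_of_corner_left (he : e * e = e) (hx : e * x * f = x) : e * x = x := by
  rw [← hx, ← mul_assoc, ← mul_assoc, he]

theorem mul_eq_self_of_corner_right (hf : f * f = f) (hx : e * x * f = x) : x * f = x := by
  rw [← hx, mul_assoc, hf]

theorem mul_eq_zero_of_corner_left {e' : R} (he' : e' * e = 0) (hx : e * x * f = x) :
    e' * x = 0 := by
  rw [← hx, ← mul_assoc, ← mul_assoc, he', zero_mul, zero_mul]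

theorem mul_eq_zero_of_corner_right {f' : R} (hf' : f * f' = 0) (hx : e * x * f = x) :
    x * f' = 0 := by
  rw [← hx, mul_assoc, hf', mul_zero]

theorem mul_eq_zero_of_corners {f' g y : R} (hff' : f * f' = 0) (hx : e * x * f = x)
    (hy : f' * y * g = y) : x * y = 0 := by
  rw [← hy, ← mul_assoc, ← mul_assoc, mul_eq_zero_of_corner_right hff' hx, zero_mul, zero_mul]

end Corner

structure TwoCycleRelations {A : Type*} [Ring A] (e₁ e₂ a b : A) : Prop where
  e₁_add_e₂ : e₁ + e₂ = 1
  e₁_mul_e₂ : e₁ * e₂ = 0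
  e₂_mul_e₁ : e₂ * e₁ = 0
  e₁_mul_e₁ : e₁ * e₁ = e₁
  e₂_mul_e₂ : e₂ * e₂ = e₂
  e₂_mul_a_mul_e₁ : e₂ * a * e₁ = a
  e₁_mul_b_mul_e₂ : e₁ * b * e₂ = b
  b_mul_a : b * a = 0

namespace TwoCycleRelations

def basisImages (k : Type*) [Zero k] [One k] : Fin 5 → Matrix (Fin 2) (Fin 2) k :=
  ![single 0 0 1, single 1 1 1, single 1 0 1, 0, 0]

section Ring

variable {A : Type*} [Ring A] {e₁ e₂ a b : A}

theorem e₂_mul_a (h : TwoCycleRelations e₁ e₂ a b) : e₂ * a = a :=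
  mul_eq_self_of_corner_left h.e₂_mul_e₂ h.e₂_mul_a_mul_e₁

theorem a_mul_e₁ (h : TwoCycleRelations e₁ e₂ a b) : a * e₁ = a :=
  mul_eq_self_of_corner_right h.e₁_mul_e₁ h.e₂_mul_a_mul_e₁

theorem e₁_mul_a (h : TwoCycleRelations e₁ e₂ a b) : e₁ * a = 0 :=
  mul_eq_zero_of_corner_left h.e₁_mul_e₂ h.e₂_mul_a_mul_e₁

theorem a_mul_e₂ (h : TwoCycleRelations e₁ e₂ a b) : a * e₂ = 0 :=
  mul_eq_zero_of_corner_right h.e₁_mul_e₂ h.e₂_mul_a_mul_e₁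

theorem e₁_mul_b (h : TwoCycleRelations e₁ e₂ a b) : e₁ * b = b :=
  mul_eq_self_of_corner_left h.e₁_mul_e₁ h.e₁_mul_b_mul_e₂

theorem b_mul_e₂ (h : TwoCycleRelations e₁ e₂ a b) : b * e₂ = b :=
  mul_eq_self_of_corner_right h.e₂_mul_e₂ h.e₁_mul_b_mul_e₂

theorem e₂_mul_b (h : TwoCycleRelations e₁ e₂ a b) : e₂ * b = 0 :=
  mul_eq_zero_of_corner_left h.e₂_mul_e₁ h.e₁_mul_b_mul_e₂

theorem b_mul_e₁ (h : TwoCycleRelations e₁ e₂ a b) : b * e₁ = 0 :=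
  mul_eq_zero_of_corner_right h.e₂_mul_e₁ h.e₁_mul_b_mul_e₂

theorem a_mul_a (h : TwoCycleRelations e₁ e₂ a b) : a * a = 0 :=
  mul_eq_zero_of_corners h.e₁_mul_e₂ h.e₂_mul_a_mul_e₁ h.e₂_mul_a_mul_e₁

theorem b_mul_b (h : TwoCycleRelations e₁ e₂ a b) : b * b = 0 :=
  mul_eq_zero_of_corners h.e₂_mul_e₁ h.e₁_mul_b_mul_e₂ h.e₁_mul_b_mul_e₂

theorem e₁_mul_ab (h : TwoCycleRelations e₁ e₂ a b) : e₁ * (a * b) = 0 := by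
  rw [← mul_assoc, h.e₁_mul_a, zero_mul]

theorem e₂_mul_ab (h : TwoCycleRelations e₁ e₂ a b) : e₂ * (a * b) = a * b := by
  rw [← mul_assoc, h.e₂_mul_a]

theorem a_mul_ab (h : TwoCycleRelations e₁ e₂ a b) : a * (a * b) = 0 := by
  rw [← mul_assoc, h.a_mul_a, zero_mul]

theorem b_mul_ab (h : TwoCycleRelations e₁ e₂ a b) : b * (a * b) = 0 := by
  rw [← mul_assoc, h.b_mul_a, zero_mul]

end Ring

variable {k A : Type*} [Field k] [Ring A] [Algebra k A] {e₁ e₂ a b : A}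

section Basis

variable (B : Module.Basis (Fin 5) k A) (hB : ⇑B = ![e₁, e₂, a, b, a * b])
include hB

theorem constr_e₁ : B.constr k (basisImages k) e₁ = single 0 0 1 := by
  rw [show e₁ = B 0 by simp [hB]]
  exact B.constr_basis k _ 0

theorem constr_e₂ : B.constr k (basisImages k) e₂ = single 1 1 1 := by
  rw [show e₂ = B 1 by simp [hB]]
  exact B.constr_basis k _ 1

theorem constr_a : B.constr k (basisImages k) a = single 1 0 1 := by
  rw [show a = B 2 by simp [hB]]
  exact B.constr_basis k _ 2

theorem constr_b : B.constr k (basisImages k) b = 0 := by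
  rw [show b = B 3 by simp [hB]]
  exact B.constr_basis k _ 3

theorem constr_ab : B.constr k (basisImages k) (a * b) = 0 := by
  rw [show a * b = B 4 by simp [hB]]
  exact B.constr_basis k _ 4

theorem constr_mul (h : TwoCycleRelations e₁ e₂ a b) (x y : A) :
    B.constr k (basisImages k) (x * y) =
      B.constr k (basisImages k) x * B.constr k (basisImages k) y := by
  refine (LinearMap.map_mul_iff _).mpr (B.ext fun i => B.ext fun j => ?_) x y
  fin_cases i <;> fin_cases j <;>
    simp only [LinearMap.compr₂_apply, LinearMap.mul_apply', LinearMap.compl₂_apply,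
      LinearMap.comp_apply, hB, Fin.zero_eta, Fin.mk_one, Fin.reduceFinMk, Matrix.cons_val] <;>
    simp only [mul_assoc, h.e₁_mul_e₁, h.e₁_mul_e₂, h.e₂_mul_e₁, h.e₂_mul_e₂, h.b_mul_a,
      h.e₂_mul_a, h.a_mul_e₁, h.e₁_mul_a, h.a_mul_e₂, h.e₁_mul_b, h.b_mul_e₂, h.e₂_mul_b,
      h.b_mul_e₁, h.a_mul_a, h.b_mul_b, h.e₁_mul_ab, h.e₂_mul_ab, h.a_mul_ab, h.b_mul_ab, map_zero,
      constr_e₁ B hB, constr_e₂ B hB, constr_a B hB, constr_b B hB, constr_ab B hB] <;>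
    simp

theorem constr_one (h : TwoCycleRelations e₁ e₂ a b) : B.constr k (basisImages k) 1 = 1 := by
  rw [← h.e₁_add_e₂, map_add, constr_e₁ B hB, constr_e₂ B hB]
  ext i j
  fin_cases i <;> fin_cases j <;> simp [one_apply]

def toMatrix (h : TwoCycleRelations e₁ e₂ a b) : A →ₐ[k] Matrix (Fin 2) (Fin 2) k :=
  .ofLinearMap (B.constr k (basisImages k)) (constr_one B hB h) (constr_mul B hB h)

theorem toMatrix_ringHom_ext (h : TwoCycleRelations e₁ e₂ a b) {S : Type*} [Semiring S]
    {g g' : Matrix (Fin 2) (Fin 2) k →+* S}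
    (hgg' : g.comp (h.toMatrix B hB : A →+* Matrix (Fin 2) (Fin 2) k) =
      g'.comp ↑(h.toMatrix B hB)) :
    g = g' := by
  have hφ (x : A) : g (h.toMatrix B hB x) = g' (h.toMatrix B hB x) := RingHom.congr_fun hgg' x
  refine Matrix.ringHom_ext_of_single_of_le fun i j c hji => ?_
  fin_cases i <;> fin_cases j
  · simpa [toMatrix, constr_e₁ B hB, smul_single] using hφ (c • e₁)
  · exact absurd hji (by decide)
  · simpa [toMatrix, constr_a B hB, smul_single] using hφ (c • a)
  · simpa [toMatrix, constr_e₂ B hB, smul_single] using hφ (c • e₂)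

theorem e₂_mul_mul_e₂ (h : TwoCycleRelations e₁ e₂ a b) (y : A) :
    e₂ * y * e₂ = B.repr y 1 • e₂ + B.repr y 4 • (a * b) := by
  conv_lhs => rw [← B.sum_repr y]
  simp [Fin.sum_univ_five, hB, mul_add, add_mul, mul_assoc, h.e₂_mul_e₁, h.e₂_mul_e₂,
    h.e₂_mul_a, h.a_mul_e₂, h.b_mul_e₂, h.e₂_mul_b, h.e₂_mul_ab]

theorem ab_mul (h : TwoCycleRelations e₁ e₂ a b) (y : A) : a * b * y = B.repr y 1 • (a * b) := by
  conv_lhs => rw [← B.sum_repr y]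
  simp [Fin.sum_univ_five, hB, mul_add, mul_assoc, h.b_mul_e₁, h.b_mul_e₂,
    h.b_mul_a, h.b_mul_b, h.b_mul_ab]

theorem e₂_notMem_span_ab (h : TwoCycleRelations e₁ e₂ a b) :
    e₂ ∉ Submodule.span Aᵐᵒᵖ {a * b} := by
  intro hmem
  obtain ⟨r, hr⟩ := Submodule.mem_span_singleton.mp hmem
  rw [MulOpposite.smul_eq_mul_unop, ab_mul B hB h] at hr
  have h₁ : B 1 = e₂ := by simp [hB]
  have h₄ : B 4 = a * b := by simp [hB]
  simpa [← h₁, ← h₄, Finsupp.single_apply] using congrArg (fun z => B.repr z 1) hr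

theorem toModuleEnd_bijective (h : TwoCycleRelations e₁ e₂ a b) :
    Function.Bijective (Module.toModuleEnd Aᵐᵒᵖ (S := k)
      (↥(Submodule.span Aᵐᵒᵖ ({e₂} : Set A)) ⧸
        Submodule.comap (Submodule.span Aᵐᵒᵖ ({e₂} : Set A)).subtype
          (Submodule.span Aᵐᵒᵖ ({a * b} : Set A)))) := by
  set N := Submodule.comap (Submodule.span Aᵐᵒᵖ ({e₂} : Set A)).subtype
    (Submodule.span Aᵐᵒᵖ ({a * b} : Set A))
  set v : Submodule.span Aᵐᵒᵖ ({e₂} : Set A) := ⟨e₂, Submodule.mem_span_singleton_self e₂⟩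
  have hm0 : N.mkQ v ≠ 0 := by
    simpa [N, v, Submodule.Quotient.mk_eq_zero] using e₂_notMem_span_ab B hB h
  have := nontrivial_of_ne _ _ hm0
  refine ⟨RingHom.injective _, Module.toModuleEnd_surjective_of_corner
    (Submodule.span_singleton_mkQ_eq_top e₂ N) (e := MulOpposite.op e₂) ?_
    fun r => ⟨B.repr r.unop 1, ?_⟩⟩
  · rw [← map_smul]
    congr 1
    exact Subtype.ext h.e₂_mul_e₂
  · rw [← sub_eq_zero, Submodule.mkQ_apply, ← Submodule.Quotient.mk_smul,
      ← Submodule.Quotient.mk_smul, ← Submodule.Quotient.mk_sub, Submodule.Quotient.mk_eq_zero,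
      Submodule.mem_comap]
    have hcorner : (MulOpposite.op e₂ * r * MulOpposite.op e₂) • e₂ = e₂ * r.unop * e₂ := by
      simp [MulOpposite.smul_eq_mul_unop, ← mul_assoc, h.e₂_mul_e₂]
    simp only [map_sub, Submodule.subtype_apply, Submodule.coe_smul_of_tower, hcorner,
      e₂_mul_mul_e₂ B hB h, add_sub_cancel_left]
    exact Submodule.smul_of_tower_mem _ _ (Submodule.mem_span_singleton_self _)

end Basis

end TwoCycleRelations

end

variable {k A : Type u} [Field k] [Ring A] [Algebra k A] [FiniteDimensional k A]

theorem endomorphism_ring_of_ellA_is_matrix_algebra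
    (e₁ e₂ a b : A)
    (hsum : e₁ + e₂ = 1) (h12 : e₁ * e₂ = 0) (h21 : e₂ * e₁ = 0)
    (he₁ : e₁ * e₁ = e₁) (he₂ : e₂ * e₂ = e₂)
    (ha : e₂ * a * e₁ = a) (hb : e₁ * b * e₂ = b)
    (hrel : b * a = 0)
    (B : Module.Basis (Fin 5) k A) (hB : ⇑B = ![e₁, e₂, a, b, a * b])
    -- `V` is (a module isomorphic to) the quotient of `P₂ = e₂A` by its socle `(a*b)A` :
    (V : Type u) [AddCommGroup V] [Module Aᵐᵒᵖ V]
    (hV : Nonempty (V ≃ₗ[Aᵐᵒᵖ]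
      (↥(Submodule.span Aᵐᵒᵖ ({e₂} : Set A)) ⧸
        Submodule.comap (Submodule.span Aᵐᵒᵖ ({e₂} : Set A)).subtype
          (Submodule.span Aᵐᵒᵖ ({a * b} : Set A))))) :
    -- `B = End_A(V ⊕ V)` is isomorphic to the `2×2` matrix algebra `M₂(k)` :
    Nonempty (Matrix (Fin 2) (Fin 2) k ≃+* Module.End Aᵐᵒᵖ (V × V)) ∧
    -- the natural map `φ : A → M₂(k)`, `e₁ ↦ E₁₁`, `e₂ ↦ E₂₂`, `α ↦ E₂₁`, `β ↦ 0`,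
    -- is a ring epimorphism :
    ∃ φ : A →+* Matrix (Fin 2) (Fin 2) k,
      φ e₁ = Matrix.single 0 0 (1 : k) ∧
      φ e₂ = Matrix.single 1 1 (1 : k) ∧
      φ a = Matrix.single 1 0 (1 : k) ∧
      φ b = 0 ∧
      (∀ (S : Type u) [Ring S] (g h : Matrix (Fin 2) (Fin 2) k →+* S),
        g.comp φ = h.comp φ → g = h) := by
  have h : TwoCycleRelations e₁ e₂ a b := ⟨hsum, h12, h21, he₁, he₂, ha, hb, hrel⟩
  obtain ⟨ε⟩ := hV
  have endV : k ≃+* Module.End Aᵐᵒᵖ V :=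
    (RingEquiv.ofBijective _ (h.toModuleEnd_bijective B hB)).trans ε.symm.conjRingEquiv
  refine ⟨⟨endV.mapMatrix.trans ((endVecRingEquivMatrixEnd (Fin 2) Aᵐᵒᵖ V).symm.trans
    (LinearEquiv.finTwoArrow Aᵐᵒᵖ V).conjRingEquiv)⟩, h.toMatrix B hB,
    TwoCycleRelations.constr_e₁ B hB, TwoCycleRelations.constr_e₂ B hB,
    TwoCycleRelations.constr_a B hB, TwoCycleRelations.constr_b B hB,
    fun S _ g g' => h.toMatrix_ringHom_ext B hB⟩

end
end

section
/- Let A be the path algebra of the quiver with vertices 1, 2, arrows α: 1 → 2 and β: 2 → 1, modulo the relation βα = 0. Then A has infinite strong global dimension: for every n ≥ 1 there exists an indecomposable complex in K^b(proj-A) of the form P_2 → P_2 → ... → P_2 → P_1 of length n (with all maps induced by αβ and the last by β or α appropriately) that is minimal. -/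
/-!
The complex is `e₂A → ⋯ → e₂A → e₁A`, with `e₂A` in degrees `0, …, n - 1`, differentials left
multiplication by `αβ` and finally by `β`. Each differential is `x ↦ c * x` with `c ∈ e'Aβ` and
`cAβ = 0`, which forces its image into every maximal submodule.

An `A`-linear map `eA → e'A` is left multiplication by an element of `e'Ae`. As `e₁Ae₁ = k` and
`βAe₁ = 0`, homotopies vanish in degree `n`, and the degree-`n` component of a chain endomorphism
is a scalar `ν`, with `ν² = ν` if the endomorphism is idempotent up to homotopy. A chain
endomorphism vanishing in degree `n` has, by descending induction, all its components in `k·αβ`,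
so it squares to zero. Hence for an idempotent `φ` of the homotopy category, `φ` or `1 - φ`
squares to zero, i.e. `φ = 0` or `φ = 1`.
-/

open CategoryTheory MulOpposite

universe u

noncomputable section

theorem Submodule.smul_mem_of_isCoatom {R M : Type*} [Ring R] [AddCommGroup M] [Module R M]
    {N : Submodule R M} (hN : IsCoatom N) {s : R} {m : M} (h : ∀ r : R, s • r • s • m = 0) :
    s • m ∈ N := by
  by_contra hsm
  have htop : N ⊔ R ∙ (s • m) = ⊤ :=
    hN.lt_iff.1 (left_lt_sup.2 fun hle => hsm (hle (Submodule.mem_span_singleton_self _)))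
  obtain ⟨x, hx, y, hy, hxy⟩ := Submodule.mem_sup.1 (htop ▸ Submodule.mem_top : m ∈ N ⊔ _)
  obtain ⟨r, rfl⟩ := Submodule.mem_span_singleton.1 hy
  have hsx : s • m = s • x := by rw [← hxy, smul_add, h, add_zero]
  exact hsm (hsx ▸ N.smul_mem s hx)

theorem CategoryTheory.Preadditive.eq_zero_or_eq_id_of_idempotent {C : Type*} [Category C]
    [Preadditive C] {X : C} {φ : X ⟶ X} (hφ : φ ≫ φ = φ)
    (h : φ ≫ φ = 0 ∨ (𝟙 X - φ) ≫ (𝟙 X - φ) = 0) : φ = 0 ∨ φ = 𝟙 X := by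
  refine h.imp (fun h₀ => hφ.symm.trans h₀) fun h₁ => ?_
  have : (𝟙 X - φ) ≫ (𝟙 X - φ) = 𝟙 X - φ := by
    simp [Preadditive.sub_comp, Preadditive.comp_sub, hφ]
  exact (sub_eq_zero.1 (this.symm.trans h₁)).symm

section CyclicRightIdeal

variable {A : Type u} [Ring A]

theorem mul_mem_span_singleton (e x : A) : e * x ∈ Submodule.span Aᵐᵒᵖ {e} :=
  Submodule.mem_span_singleton.2 ⟨op x, rfl⟩

theorem mem_span_idempotent_iff {e x : A} (he : IsIdempotentElem e) :
    x ∈ Submodule.span Aᵐᵒᵖ {e} ↔ e * x = x := by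
  refine ⟨fun hx => ?_, fun hx => hx ▸ mul_mem_span_singleton e x⟩
  obtain ⟨r, rfl⟩ := Submodule.mem_span_singleton.1 hx
  exact (mul_assoc e e r.unop).symm.trans (congrArg (· * r.unop) he.eq)

theorem projective_span_idempotent {e : A} (he : IsIdempotentElem e) :
    Module.Projective Aᵐᵒᵖ (Submodule.span Aᵐᵒᵖ {e}) :=
  have : Module.Projective Aᵐᵒᵖ A := .of_equiv (opLinearEquiv Aᵐᵒᵖ).symm
  .of_split (Submodule.subtype _)
    ((LinearMap.mulLeft Aᵐᵒᵖ e).codRestrict _ (mul_mem_span_singleton e))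
    (LinearMap.ext fun x => Subtype.ext ((mem_span_idempotent_iff he).1 x.2))

def spanGen (e : A) : Submodule.span Aᵐᵒᵖ {e} := ⟨e, Submodule.mem_span_singleton_self e⟩

@[simp] theorem spanGen_val (e : A) : (spanGen e).val = e := rfl

theorem val_apply_eq_val_apply_spanGen_mul {e e' : A} (he : IsIdempotentElem e)
    (f : Submodule.span Aᵐᵒᵖ {e} →ₗ[Aᵐᵒᵖ] Submodule.span Aᵐᵒᵖ {e'})
    (x : Submodule.span Aᵐᵒᵖ {e}) : (f x).val = (f (spanGen e)).val * x.val := by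
  have hx : op x.val • spanGen e = x := Subtype.ext ((mem_span_idempotent_iff he).1 x.2)
  calc (f x).val = (f (op x.val • spanGen e)).val := by rw [hx]
    _ = _ := by rw [map_smul]; rfl

theorem mul_val_apply_spanGen_mul {e e' : A} (he : IsIdempotentElem e)
    (he' : IsIdempotentElem e')
    (f : Submodule.span Aᵐᵒᵖ {e} →ₗ[Aᵐᵒᵖ] Submodule.span Aᵐᵒᵖ {e'}) :
    e' * (f (spanGen e)).val * e = (f (spanGen e)).val := by
  rw [(mem_span_idempotent_iff he').1 (f _).2]
  exact (val_apply_eq_val_apply_spanGen_mul he f (spanGen e)).symm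

end CyclicRightIdeal

section LeftMulComplex

variable {A : Type u} [Ring A] (ε δ : ℤ → A) (hε : ∀ i, ε (i + 1) * δ i = δ i)
  (hδ : ∀ i, δ (i + 1) * δ i = 0)

abbrev leftMulComplex : CochainComplex (ModuleCat.{u} Aᵐᵒᵖ) ℤ :=
  CochainComplex.of (fun i => ModuleCat.of Aᵐᵒᵖ (Submodule.span Aᵐᵒᵖ {ε i}))
    (fun i => ModuleCat.ofHom <|
      ((LinearMap.mulLeft Aᵐᵒᵖ (δ i)).codRestrict _ fun x => by
        rw [LinearMap.mulLeft_apply, ← hε i, mul_assoc]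
        exact mul_mem_span_singleton _ _).domRestrict _)
    fun i => by
      ext x
      exact (mul_assoc _ _ _).symm.trans (by rw [hδ, zero_mul]; rfl)

namespace leftMulComplex

variable {ε δ hε hδ}

theorem d_val {i j : ℤ} (h : i + 1 = j) (x : Submodule.span Aᵐᵒᵖ {ε i}) :
    ((leftMulComplex ε δ hε hδ).d i j x).val = δ i * x.val := by
  subst h
  simp [leftMulComplex]

theorem diff_mul_hom_f_spanGen {i : ℤ} (hε' : IsIdempotentElem (ε (i + 1)))
    (χ : leftMulComplex ε δ hε hδ ⟶ leftMulComplex ε δ hε hδ) :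
    δ i * (χ.f i (spanGen (ε i))).val =
      (χ.f (i + 1) (spanGen (ε (i + 1)))).val * (δ i * ε i) := by
  let K := leftMulComplex ε δ hε hδ
  calc δ i * (χ.f i (spanGen (ε i))).val = (K.d i (i + 1) (χ.f i (spanGen (ε i)))).val :=
        (d_val rfl _).symm
    _ = (χ.f (i + 1) (K.d i (i + 1) (spanGen (ε i)))).val := by
        rw [← ConcreteCategory.comp_apply, ← ConcreteCategory.comp_apply, χ.comm]
    _ = _ := by
        rw [val_apply_eq_val_apply_spanGen_mul hε' (χ.f (i + 1)).hom, d_val rfl]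
        rfl

theorem range_d_le_iInf_isCoatom {i : ℤ} {g t : A} (hg : δ i = ε (i + 1) * g * t)
    (ht : ∀ r, δ i * r * t = 0) :
    LinearMap.range ((leftMulComplex ε δ hε hδ).d i (i + 1)).hom ≤
      ⨅ (N : Submodule Aᵐᵒᵖ ((leftMulComplex ε δ hε hδ).X (i + 1))) (_ : IsCoatom N), N := by
  refine le_iInf₂ fun N hN => ?_
  rintro _ ⟨x, rfl⟩
  have hx : (leftMulComplex ε δ hε hδ).d i (i + 1) x =
      op (t * x.val) •
        (⟨ε (i + 1) * g, mul_mem_span_singleton _ _⟩ : Submodule.span Aᵐᵒᵖ {ε (i + 1)}) :=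
    Subtype.ext <| (d_val rfl x).trans <| by rw [hg, mul_assoc]; rfl
  rw [hx]
  refine Submodule.smul_mem_of_isCoatom hN fun r => Subtype.ext ?_
  show ε (i + 1) * g * (t * x.val) * r.unop * (t * x.val) = 0
  calc _ = δ i * (x.val * r.unop) * t * x.val := by rw [hg]; simp only [mul_assoc]
    _ = 0 := by rw [ht, zero_mul]

end leftMulComplex

end LeftMulComplex

structure PathAlgebraModBetaAlpha (k A : Type u) [Field k] [Ring A] [Algebra k A] where
  e₁ : A
  e₂ : A
  a : A
  b : A
  e₁_mul_e₂ : e₁ * e₂ = 0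
  e₂_mul_e₁ : e₂ * e₁ = 0
  e₁_mul_e₁ : e₁ * e₁ = e₁
  e₂_mul_e₂ : e₂ * e₂ = e₂
  e₂_mul_a_mul_e₁ : e₂ * a * e₁ = a
  e₁_mul_b_mul_e₂ : e₁ * b * e₂ = b
  b_mul_a : b * a = 0
  basis : Module.Basis (Fin 5) k A
  coe_basis : ⇑basis = ![e₁, e₂, a, b, a * b]

namespace PathAlgebraModBetaAlpha

variable {k A : Type u} [Field k] [Ring A] [Algebra k A] (p : PathAlgebraModBetaAlpha k A)

attribute [simp] e₁_mul_e₂ e₂_mul_e₁ e₁_mul_e₁ e₂_mul_e₂ b_mul_a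

@[simp] theorem e₁_mul_a : p.e₁ * p.a = 0 := by
  rw [← p.e₂_mul_a_mul_e₁, ← mul_assoc, ← mul_assoc, p.e₁_mul_e₂, zero_mul, zero_mul]
@[simp] theorem e₂_mul_a : p.e₂ * p.a = p.a := by
  rw [← p.e₂_mul_a_mul_e₁, ← mul_assoc, ← mul_assoc, p.e₂_mul_e₂]
@[simp] theorem a_mul_e₂ : p.a * p.e₂ = 0 := by
  rw [← p.e₂_mul_a_mul_e₁, mul_assoc, p.e₁_mul_e₂, mul_zero]
@[simp] theorem e₁_mul_b : p.e₁ * p.b = p.b := by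
  rw [← p.e₁_mul_b_mul_e₂, ← mul_assoc, ← mul_assoc, p.e₁_mul_e₁]
@[simp] theorem e₂_mul_b : p.e₂ * p.b = 0 := by
  rw [← p.e₁_mul_b_mul_e₂, ← mul_assoc, ← mul_assoc, p.e₂_mul_e₁, zero_mul, zero_mul]
@[simp] theorem b_mul_e₁ : p.b * p.e₁ = 0 := by
  rw [← p.e₁_mul_b_mul_e₂, mul_assoc, p.e₂_mul_e₁, mul_zero]
@[simp] theorem b_mul_e₂ : p.b * p.e₂ = p.b := by
  rw [← p.e₁_mul_b_mul_e₂, mul_assoc, p.e₂_mul_e₂]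
@[simp] theorem b_mul_b : p.b * p.b = 0 := by
  nth_rw 2 [← p.e₁_mul_b]
  rw [← mul_assoc, b_mul_e₁, zero_mul]
@[simp] theorem a_mul_b_mul_e₂ : p.a * p.b * p.e₂ = p.a * p.b := by
  rw [mul_assoc, b_mul_e₂]
@[simp] theorem a_mul_b_mul_a : p.a * p.b * p.a = 0 := by
  rw [mul_assoc, b_mul_a, mul_zero]

theorem mul_mul_eq_sum (u v x : A) :
    u * x * v = ∑ j, p.basis.repr x j • (u * p.basis j * v) := by
  conv_lhs => rw [← p.basis.sum_repr x]
  simp only [Finset.mul_sum, Finset.sum_mul, mul_smul_comm, smul_mul_assoc]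

theorem b_mul_mul_e₁ (x : A) : p.b * x * p.e₁ = 0 := by
  rw [p.mul_mul_eq_sum, Fin.sum_univ_five, p.coe_basis]
  simp [← mul_assoc]

theorem e₁_mul_mul_e₁ (x : A) : ∃ c : k, p.e₁ * x * p.e₁ = c • p.e₁ := by
  refine ⟨p.basis.repr x 0, ?_⟩
  rw [p.mul_mul_eq_sum, Fin.sum_univ_five, p.coe_basis]
  simp [← mul_assoc]

theorem e₂_mul_mul_e₂ (x : A) :
    ∃ c d : k, p.e₂ * x * p.e₂ = c • p.e₂ + d • (p.a * p.b) := by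
  refine ⟨p.basis.repr x 1, p.basis.repr x 4, ?_⟩
  rw [p.mul_mul_eq_sum, Fin.sum_univ_five, p.coe_basis]
  simp [← mul_assoc]

theorem b_mul_mul_b (x : A) : p.b * x * p.b = 0 := by
  nth_rw 2 [← p.e₁_mul_b]
  rw [← mul_assoc, p.b_mul_mul_e₁, zero_mul]

theorem e₁_ne_zero : p.e₁ ≠ 0 := by simpa [p.coe_basis] using p.basis.ne_zero 0

theorem b_ne_zero : p.b ≠ 0 := by simpa [p.coe_basis] using p.basis.ne_zero 3

theorem a_mul_b_ne_zero : p.a * p.b ≠ 0 := by simpa [p.coe_basis] using p.basis.ne_zero 4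

def idem (n : ℕ) (i : ℤ) : A :=
  if i = n then p.e₁ else if 0 ≤ i ∧ i < n then p.e₂ else 0

def diff (n : ℕ) (i : ℤ) : A :=
  if i + 1 = n then p.b else if 0 ≤ i ∧ i + 1 < n then p.a * p.b else 0

variable (n : ℕ)

theorem isIdempotentElem_idem (i : ℤ) : IsIdempotentElem (p.idem n i) := by
  unfold idem; split_ifs <;> simp [IsIdempotentElem]

theorem idem_mul_diff (i : ℤ) : p.idem n (i + 1) * p.diff n i = p.diff n i := by
  unfold idem diff; split_ifs <;> first | omega | simp [← mul_assoc]

theorem diff_mul_diff (i : ℤ) : p.diff n (i + 1) * p.diff n i = 0 := by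
  unfold diff; split_ifs <;> first | omega | simp [← mul_assoc]

abbrev complex : CochainComplex (ModuleCat.{u} Aᵐᵒᵖ) ℤ :=
  leftMulComplex (p.idem n) (p.diff n) (p.idem_mul_diff n) (p.diff_mul_diff n)

theorem idem_self : p.idem n n = p.e₁ := if_pos rfl

theorem idem_of_lt {i : ℤ} (h₀ : 0 ≤ i) (h : i < (n : ℤ)) : p.idem n i = p.e₂ := by
  rw [idem, if_neg h.ne, if_pos ⟨h₀, h⟩]

theorem idem_of_lt_or_lt {i : ℤ} (h : i < 0 ∨ (n : ℤ) < i) : p.idem n i = 0 := by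
  rw [idem, if_neg, if_neg] <;> omega

theorem diff_self : p.diff n n = 0 := by
  rw [diff, if_neg, if_neg] <;> omega

theorem diff_sub_one_mul_mul_idem_self (x : A) :
    p.diff n ((n : ℤ) - 1) * (x * p.idem n n) = 0 := by
  rw [diff, if_pos (sub_add_cancel (n : ℤ) 1), idem_self, ← mul_assoc, b_mul_mul_e₁]

theorem diff_mul_a_mul_b (i : ℤ) : p.diff n i * (p.a * p.b) = 0 := by
  unfold diff; split_ifs <;> simp [← mul_assoc]

theorem a_mul_b_mul_diff (i : ℤ) : p.a * p.b * p.diff n i = 0 := by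
  unfold diff; split_ifs <;> simp [mul_assoc, ← mul_assoc p.b p.a]

theorem diff_mul_idem_ne_zero {i : ℤ} (h₀ : 0 ≤ i) (h : i < (n : ℤ)) :
    p.diff n i * p.idem n i ≠ 0 := by
  rw [idem_of_lt p n h₀ h, diff]
  split_ifs <;> first | omega | simp [p.b_ne_zero, p.a_mul_b_ne_zero]

theorem diff_eq_idem_mul_mul_b (i : ℤ) : ∃ g, p.diff n i = p.idem n (i + 1) * g * p.b := by
  unfold diff idem
  split_ifs
  · exact ⟨1, by simp⟩
  · exact ⟨p.a, by simp⟩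
  · omega
  all_goals exact ⟨0, by simp⟩

theorem diff_mul_mul_b (i : ℤ) (r : A) : p.diff n i * r * p.b = 0 := by
  have hb := p.b_mul_mul_b r
  simp only [mul_assoc] at hb
  unfold diff; split_ifs <;> simp [mul_assoc, hb]

theorem idem_self_mul_mul_idem_self (x : A) :
    ∃ c : k, p.idem n n * x * p.idem n n = c • p.idem n n := by
  rw [idem_self]; exact p.e₁_mul_mul_e₁ x

theorem idem_mul_mul_idem {i : ℤ} (h₀ : 0 ≤ i) (h : i < (n : ℤ)) (x : A) :
    ∃ c d : k, p.idem n i * x * p.idem n i = c • p.idem n i + d • (p.a * p.b) := by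
  rw [idem_of_lt p n h₀ h]; exact p.e₂_mul_mul_e₂ x

open leftMulComplex

variable {n}

theorem f_self_eq_of_homotopy {F G : p.complex n ⟶ p.complex n} (h : Homotopy F G) :
    F.f n = G.f n := by
  have hε := p.isIdempotentElem_idem n
  have hd : (p.complex n).d n (n + 1) = 0 := by
    ext x
    rw [d_val rfl, diff_self, zero_mul]
    rfl
  have hprev : h.hom n (n - 1) ≫ (p.complex n).d (n - 1) n = 0 := by
    ext x
    show ((p.complex n).d (n - 1) n (h.hom n (n - 1) x)).val = 0
    refine (d_val (sub_add_cancel _ 1) _).trans ?_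
    rw [val_apply_eq_val_apply_spanGen_mul (hε n) (h.hom n (n - 1)).hom,
      ← mul_val_apply_spanGen_mul (hε n) (hε (n - 1)), ← mul_assoc,
      p.diff_sub_one_mul_mul_idem_self, zero_mul]
  rw [h.comm n, dNext_eq h.hom (show (ComplexShape.up ℤ).Rel n (n + 1) from rfl),
    prevD_eq h.hom (show (ComplexShape.up ℤ).Rel (n - 1) n from sub_add_cancel _ 1), hd, hprev,
    Limits.zero_comp, zero_add, zero_add]

theorem exists_f_self_val_eq_smul (F : p.complex n ⟶ p.complex n) :
    ∃ ν : k, ∀ x, (F.f n x).val = ν • x.val := by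
  have he := p.isIdempotentElem_idem n n
  obtain ⟨ν, hν⟩ := p.idem_self_mul_mul_idem_self n (F.f n (spanGen (p.idem n n))).val
  refine ⟨ν, fun x => ?_⟩
  rw [val_apply_eq_val_apply_spanGen_mul he (F.f n).hom, ← mul_val_apply_spanGen_mul he he, hν,
    smul_mul_assoc, (mem_span_idempotent_iff he).1 x.2]

theorem exists_f_spanGen_val_eq_smul_a_mul_b {χ : p.complex n ⟶ p.complex n} (hχ : χ.f n = 0)
    (i : ℤ) : ∃ μ : k, (χ.f i (spanGen (p.idem n i))).val = μ • (p.a * p.b) := by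
  have hε := p.isIdempotentElem_idem n
  have outside {j : ℤ} (hj : j < 0 ∨ (n : ℤ) < j) :
      ∃ μ : k, (χ.f j (spanGen (p.idem n j))).val = μ • (p.a * p.b) := by
    have h0 (x : A) : p.idem n j * x = 0 := by rw [p.idem_of_lt_or_lt n hj, zero_mul]
    exact ⟨0, by rw [← mul_val_apply_spanGen_mul (hε j) (hε j) (χ.f j).hom, mul_assoc, h0,
      zero_smul]⟩
  have step {j : ℤ} (h₀ : 0 ≤ j) (hj : j < n)
      (hsucc : ∃ μ : k, (χ.f (j + 1) (spanGen (p.idem n (j + 1)))).val = μ • (p.a * p.b)) :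
      ∃ μ : k, (χ.f j (spanGen (p.idem n j))).val = μ • (p.a * p.b) := by
    obtain ⟨μ, hμ⟩ := hsucc
    obtain ⟨c, d, hcd⟩ := p.idem_mul_mul_idem n h₀ hj (χ.f j (spanGen (p.idem n j))).val
    rw [mul_val_apply_spanGen_mul (hε j) (hε j) (χ.f j).hom] at hcd
    -- the commutation square at `j` reads `c • δⱼεⱼ = μ • αβ δⱼεⱼ = 0`
    have hcomm := diff_mul_hom_f_spanGen (hε (j + 1)) χ
    rw [hμ, hcd, mul_add, mul_smul_comm, mul_smul_comm, diff_mul_a_mul_b, smul_zero, add_zero,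
      smul_mul_assoc, ← mul_assoc, a_mul_b_mul_diff, zero_mul, smul_zero] at hcomm
    have hc : c = 0 := (smul_eq_zero.1 hcomm).resolve_right (p.diff_mul_idem_ne_zero n h₀ hj)
    exact ⟨d, by rw [hcd, hc, zero_smul, zero_add]⟩
  rcases le_or_gt i n with hi | hi
  · induction i, hi using Int.leInductionDown with
    | base => exact ⟨0, by rw [hχ, zero_smul]; rfl⟩
    | pred j hj ih =>
      rcases lt_or_ge (j - 1) 0 with hneg | hnonneg
      · exact outside (.inl hneg)
      · exact step hnonneg (by omega) (by rwa [sub_add_cancel])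
  · exact outside (.inr hi)

theorem comp_self_eq_zero {χ : p.complex n ⟶ p.complex n} (hχ : χ.f n = 0) : χ ≫ χ = 0 := by
  ext i x
  have hε := p.isIdempotentElem_idem n i
  obtain ⟨μ, hμ⟩ := p.exists_f_spanGen_val_eq_smul_a_mul_b hχ i
  show (χ.f i (χ.f i x)).val = 0
  rw [val_apply_eq_val_apply_spanGen_mul hε (χ.f i).hom,
    val_apply_eq_val_apply_spanGen_mul hε (χ.f i).hom x, hμ]
  simp [← mul_assoc]

theorem not_isZero_quotient_obj :
    ¬ Limits.IsZero ((HomotopyCategory.quotient (ModuleCat.{u} Aᵐᵒᵖ) (ComplexShape.up ℤ)).obj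
      (p.complex n)) := by
  intro hz
  have h := p.f_self_eq_of_homotopy (HomotopyCategory.homotopyOfEq (𝟙 _) 0
    (by rw [CategoryTheory.Functor.map_id, Functor.map_zero]; exact hz.eq_of_src _ _))
  have hgen := congrArg Subtype.val (ConcreteCategory.congr_hom h (spanGen (p.idem n n)))
  exact p.e₁_ne_zero ((p.idem_self n).symm.trans hgen)

theorem comp_self_eq_zero_or_of_homotopy (ψ : p.complex n ⟶ p.complex n)
    (h : Homotopy (ψ ≫ ψ) ψ) : ψ ≫ ψ = 0 ∨ (𝟙 _ - ψ) ≫ (𝟙 _ - ψ) = 0 := by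
  obtain ⟨ν, hν⟩ := p.exists_f_self_val_eq_smul ψ
  have hν2 : IsIdempotentElem ν := by
    have hgen := congrArg Subtype.val
      (ConcreteCategory.congr_hom (p.f_self_eq_of_homotopy h) (spanGen (p.idem n n)))
    rw [HomologicalComplex.comp_f, ConcreteCategory.comp_apply, hν, hν, smul_smul,
      spanGen_val, p.idem_self] at hgen
    exact smul_left_injective k p.e₁_ne_zero hgen
  rcases IsIdempotentElem.iff_eq_zero_or_one.1 hν2 with rfl | rfl
  · left
    exact p.comp_self_eq_zero (by ext x; rw [hν, zero_smul]; rfl)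
  · right
    refine p.comp_self_eq_zero ?_
    ext x
    show x.val - (ψ.f n x).val = 0
    rw [hν, one_smul, sub_self]

theorem eq_zero_or_eq_id_of_idempotent
    (φ : (HomotopyCategory.quotient (ModuleCat.{u} Aᵐᵒᵖ) (ComplexShape.up ℤ)).obj (p.complex n) ⟶
      (HomotopyCategory.quotient (ModuleCat.{u} Aᵐᵒᵖ) (ComplexShape.up ℤ)).obj (p.complex n))
    (hφ : φ ≫ φ = φ) : φ = 0 ∨ φ = 𝟙 _ := by
  let Q := HomotopyCategory.quotient (ModuleCat.{u} Aᵐᵒᵖ) (ComplexShape.up ℤ)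
  obtain ⟨ψ, rfl⟩ := Q.map_surjective φ
  have h := HomotopyCategory.homotopyOfEq (ψ ≫ ψ) ψ (by rw [Q.map_comp, hφ])
  refine Preadditive.eq_zero_or_eq_id_of_idempotent hφ
    ((p.comp_self_eq_zero_or_of_homotopy ψ h).imp (fun h₀ => ?_) fun h₁ => ?_)
  · rw [← Q.map_comp, h₀, Q.map_zero]
  · rw [← Q.map_id, ← Q.map_sub, ← Q.map_comp, h₁, Q.map_zero]

end PathAlgebraModBetaAlpha

variable {k A : Type u} [Field k] [Ring A] [Algebra k A]

theorem infinite_strong_global_dimension_of_kQ_mod_betaAlpha_general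
    (e₁ e₂ a b : A)
    (h12 : e₁ * e₂ = 0) (h21 : e₂ * e₁ = 0)
    (he₁ : e₁ * e₁ = e₁) (he₂ : e₂ * e₂ = e₂)
    (ha : e₂ * a * e₁ = a) (hb : e₁ * b * e₂ = b)
    (hrel : b * a = 0)
    (B : Module.Basis (Fin 5) k A) (hB : ⇑B = ![e₁, e₂, a, b, a * b])
    (P₁ P₂ : Submodule Aᵐᵒᵖ A)
    (hP₁ : P₁ = Submodule.span Aᵐᵒᵖ {e₁}) (hP₂ : P₂ = Submodule.span Aᵐᵒᵖ {e₂}) :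
    ∀ n : ℕ, 1 ≤ n →
      ∃ K : CochainComplex (ModuleCat.{u} Aᵐᵒᵖ) ℤ,
        -- the terms are `P₂, ..., P₂, P₁` in degrees `0, ..., n` :
        (∀ i : ℤ, 0 ≤ i → i < n → Nonempty (↥(K.X i) ≃ₗ[Aᵐᵒᵖ] ↥P₂)) ∧
        Nonempty (↥(K.X n) ≃ₗ[Aᵐᵒᵖ] ↥P₁) ∧
        (∀ i : ℤ, (i < 0 ∨ (n : ℤ) < i) → Limits.IsZero (K.X i)) ∧
        -- all terms are finitely generated projective :
        (∀ i : ℤ, Module.Finite Aᵐᵒᵖ (K.X i) ∧ Projective (K.X i)) ∧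
        -- minimality: every differential lands in the radical :
        (∀ i : ℤ, LinearMap.range (K.d i (i + 1)).hom ≤
          ⨅ (N : Submodule Aᵐᵒᵖ (K.X (i + 1))) (_ : IsCoatom N), N) ∧
        -- `K` is indecomposable in the homotopy category `K^b(proj-A)` :
        (¬ Limits.IsZero
            ((HomotopyCategory.quotient (ModuleCat.{u} Aᵐᵒᵖ) (ComplexShape.up ℤ)).obj K) ∧
          ∀ φ : ((HomotopyCategory.quotient (ModuleCat.{u} Aᵐᵒᵖ)
                (ComplexShape.up ℤ)).obj K) ⟶
              ((HomotopyCategory.quotient (ModuleCat.{u} Aᵐᵒᵖ)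
                (ComplexShape.up ℤ)).obj K),
            φ ≫ φ = φ → φ = 0 ∨
              φ = 𝟙 ((HomotopyCategory.quotient (ModuleCat.{u} Aᵐᵒᵖ)
                (ComplexShape.up ℤ)).obj K)) := by
  intro n _
  let p : PathAlgebraModBetaAlpha k A := ⟨e₁, e₂, a, b, h12, h21, he₁, he₂, ha, hb, hrel, B, hB⟩
  refine ⟨p.complex n, fun i h₀ hi => ⟨.ofEq _ _ ?_⟩, ⟨.ofEq _ _ ?_⟩, fun i hi => ?_,
    fun i => ⟨inferInstance, ?_⟩, fun i => ?_, p.not_isZero_quotient_obj,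
    p.eq_zero_or_eq_id_of_idempotent⟩
  · rw [hP₂, p.idem_of_lt n h₀ hi]
  · rw [hP₁, p.idem_self]
  · have : Submodule.span Aᵐᵒᵖ {p.idem n i} = ⊥ := by
      rw [p.idem_of_lt_or_lt n hi, Submodule.span_zero_singleton]
    have := Submodule.subsingleton_iff_eq_bot.2 this
    exact ModuleCat.isZero_of_subsingleton _
  · exact (IsProjective.iff_projective _).1
      (projective_span_idempotent (p.isIdempotentElem_idem n i))
  · obtain ⟨g, hg⟩ := p.diff_eq_idem_mul_mul_b n i
    exact leftMulComplex.range_d_le_iInf_isCoatom hg (p.diff_mul_mul_b n i)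

theorem infinite_strong_global_dimension_of_kQ_mod_betaAlpha
    (e₁ e₂ a b : A)
    (hsum : e₁ + e₂ = 1) (h12 : e₁ * e₂ = 0) (h21 : e₂ * e₁ = 0)
    (he₁ : e₁ * e₁ = e₁) (he₂ : e₂ * e₂ = e₂)
    (ha : e₂ * a * e₁ = a) (hb : e₁ * b * e₂ = b)
    (hrel : b * a = 0)
    (B : Module.Basis (Fin 5) k A) (hB : ⇑B = ![e₁, e₂, a, b, a * b])
    (P₁ P₂ : Submodule Aᵐᵒᵖ A)
    (hP₁ : P₁ = Submodule.span Aᵐᵒᵖ {e₁}) (hP₂ : P₂ = Submodule.span Aᵐᵒᵖ {e₂}) :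
    ∀ n : ℕ, 1 ≤ n →
      ∃ K : CochainComplex (ModuleCat.{u} Aᵐᵒᵖ) ℤ,
        -- the terms are `P₂, ..., P₂, P₁` in degrees `0, ..., n` :
        (∀ i : ℤ, 0 ≤ i → i < n → Nonempty (↥(K.X i) ≃ₗ[Aᵐᵒᵖ] ↥P₂)) ∧
        Nonempty (↥(K.X n) ≃ₗ[Aᵐᵒᵖ] ↥P₁) ∧
        (∀ i : ℤ, (i < 0 ∨ (n : ℤ) < i) → Limits.IsZero (K.X i)) ∧
        -- all terms are finitely generated projective :
        (∀ i : ℤ, Module.Finite Aᵐᵒᵖ (K.X i) ∧ Projective (K.X i)) ∧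
        -- minimality: every differential lands in the radical :
        (∀ i : ℤ, LinearMap.range (K.d i (i + 1)).hom ≤
          ⨅ (N : Submodule Aᵐᵒᵖ (K.X (i + 1))) (_ : IsCoatom N), N) ∧
        -- `K` is indecomposable in the homotopy category `K^b(proj-A)` :
        (¬ Limits.IsZero
            ((HomotopyCategory.quotient (ModuleCat.{u} Aᵐᵒᵖ) (ComplexShape.up ℤ)).obj K) ∧
          ∀ φ : ((HomotopyCategory.quotient (ModuleCat.{u} Aᵐᵒᵖ)
                (ComplexShape.up ℤ)).obj K) ⟶
              ((HomotopyCategory.quotient (ModuleCat.{u} Aᵐᵒᵖ)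
                (ComplexShape.up ℤ)).obj K),
            φ ≫ φ = φ → φ = 0 ∨
              φ = 𝟙 ((HomotopyCategory.quotient (ModuleCat.{u} Aᵐᵒᵖ)
                (ComplexShape.up ℤ)).obj K)) :=
  infinite_strong_global_dimension_of_kQ_mod_betaAlpha_general e₁ e₂ a b h12 h21 he₁ he₂ ha hb hrel
    B hB P₁ P₂ hP₁ hP₂

end
end
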